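/- arXiv:2406.15950 — 3 statements merged into one kernel-verified Lean document; each statement's English description precedes it below -/
import Mathlib

section
/- Let (v_n) ∈ GS(v*) and (γ_n) ∈ GS(-1), and let m > 0 with m - v*·ε₀ > 0, where ε₀ = lim_{n→∞} (n γ_n)^{-1}. Let π_n = ∏_{i=1}^n (1 - γ_i) (assumed nonzero). Then lim_{n→∞} v_n π_n^m ∑_{i=1}^n π_i^{-m} (γ_i / v_i) = 1/(m - v* ε₀). -/
open Filter Finset

/-- `(v_n) ∈ GS(a)` : positive sequence with `n (1 - v_{n-1}/v_n) → a`. -/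
def IsGS (v : ℕ → ℝ) (a : ℝ) : Prop :=
  (∀ n, 0 < v n) ∧
    Tendsto (fun n : ℕ => (n : ℝ) * (1 - v (n - 1) / v n)) atTop (nhds a)


lemma mps_aux (T c g : ℕ → ℝ) (K : ℝ) (hK : 0 < K)
    (hg : ∀ n, 0 < g n)
    (hg0 : Tendsto g atTop (nhds 0))
    (hrec : ∀ n, 1 ≤ n → T n = c n * T (n - 1) + g n)
    (hlim : Tendsto (fun n => (1 - c n) / g n) atTop (nhds K))
    (hsum : Tendsto (fun n => ∑ i ∈ Icc 1 n, g i) atTop atTop) :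
    Tendsto T atTop (nhds (1 / K)) := by
  rw [Metric.tendsto_atTop]
  intro ε hε
  set δ : ℝ := min (K / 2) (ε * K ^ 2 / 4) with hδdef
  have hδ0 : 0 < δ := lt_min (by linarith) (by positivity)
  have hδK : δ ≤ K / 2 := min_le_left _ _
  have hδε : δ ≤ ε * K ^ 2 / 4 := min_le_right _ _
  have hKδ : 0 < K - δ := by linarith
  have hKδ' : 0 < K + δ := by linarith
  -- c tends to 1
  have hc1 : Tendsto c atTop (nhds 1) := by
    have h : Tendsto (fun n => 1 - g n * ((1 - c n) / g n)) atTop (nhds (1 - 0 * K)) :=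
      tendsto_const_nhds.sub (hg0.mul hlim)
    rw [show (1 : ℝ) - 0 * K = 1 by ring] at h
    refine h.congr fun n => ?_
    field_simp [(hg n).ne']
    ring
  -- eventual bounds
  have hev : ∀ᶠ n in atTop,
      (0 ≤ c n ∧ (K - δ) * g n ≤ 1 - c n ∧ 1 - c n ≤ (K + δ) * g n) := by
    have h1 : ∀ᶠ n in atTop, (0:ℝ) < c n :=
      hc1.eventually (eventually_gt_nhds one_pos)
    have h2 : ∀ᶠ n in atTop, (1 - c n) / g n < K + δ :=
      hlim.eventually (eventually_lt_nhds (by linarith))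
    have h3 : ∀ᶠ n in atTop, K - δ < (1 - c n) / g n :=
      hlim.eventually (eventually_gt_nhds (by linarith))
    filter_upwards [h1, h2, h3] with n hn1 hn2 hn3
    refine ⟨hn1.le, ?_, ?_⟩
    · rw [lt_div_iff₀ (hg n)] at hn3; linarith
    · rw [div_lt_iff₀ (hg n)] at hn2; linarith
  obtain ⟨N, hN⟩ := eventually_atTop.mp hev
  set A : ℝ := |T N - 1 / (K - δ)| with hA
  set B : ℝ := |T N - 1 / (K + δ)| with hB
  set P : ℕ → ℝ := fun n => ∏ i ∈ Icc (N + 1) n, c i with hPdef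
  have hP0 : ∀ n, 0 ≤ P n := by
    intro n
    refine Finset.prod_nonneg fun i hi => ?_
    simp only [Finset.mem_Icc] at hi
    exact (hN i (by omega)).1
  -- product recursion and key induction
  have key : ∀ n, N ≤ n →
      T n ≤ 1 / (K - δ) + P n * A ∧ 1 / (K + δ) - P n * B ≤ T n := by
    intro n hn
    induction n, hn using Nat.le_induction with
    | base =>
      have hPN : P N = 1 := by
        simp [hPdef, Finset.Icc_eq_empty (by omega : ¬ N + 1 ≤ N)]
      have h1 : T N - 1 / (K - δ) ≤ A := le_abs_self _
      have h2 : -B ≤ T N - 1 / (K + δ) := neg_abs_le _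
      constructor <;> rw [hPN] <;> linarith
    | succ n hn ih =>
      obtain ⟨hc0, hcl, hcu⟩ := hN (n + 1) (by omega)
      have hr : T (n + 1) = c (n + 1) * T n + g (n + 1) := by
        have := hrec (n + 1) (by omega); simpa using this
      have hPn : P (n + 1) = P n * c (n + 1) :=
        Finset.prod_Icc_succ_top (by omega) c
      obtain ⟨ih1, ih2⟩ := ih
      have hPn0 : 0 ≤ P n := hP0 n
      constructor
      · have h5 : c (n + 1) * T n ≤ c (n + 1) * (1 / (K - δ) + P n * A) :=
          mul_le_mul_of_nonneg_left ih1 hc0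
        have h6 : g (n + 1) - (1 - c (n + 1)) / (K - δ) ≤ 0 := by
          rw [sub_nonpos, le_div_iff₀ hKδ]
          linarith
        have h7 : c (n + 1) * (1 / (K - δ) + P n * A)
            = 1 / (K - δ) - (1 - c (n + 1)) / (K - δ) + P (n + 1) * A := by
          rw [hPn]; field_simp; ring
        rw [hr]; linarith
      · have h5 : c (n + 1) * (1 / (K + δ) - P n * B) ≤ c (n + 1) * T n :=
          mul_le_mul_of_nonneg_left ih2 hc0
        have h6 : 0 ≤ g (n + 1) - (1 - c (n + 1)) / (K + δ) := by
          rw [sub_nonneg, div_le_iff₀ hKδ']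
          linarith
        have h7 : c (n + 1) * (1 / (K + δ) - P n * B)
            = 1 / (K + δ) - (1 - c (n + 1)) / (K + δ) - P (n + 1) * B := by
          rw [hPn]; field_simp; ring
        rw [hr]; linarith
  -- P tends to 0
  have hPlim : Tendsto P atTop (nhds 0) := by
    apply squeeze_zero' (Eventually.of_forall hP0)
      (g := fun n => Real.exp (-(K - δ) * ((∑ i ∈ Icc 1 n, g i) - ∑ i ∈ Icc 1 N, g i)))
    · filter_upwards [eventually_ge_atTop N] with n hn
      have hs : ∑ i ∈ Icc (N + 1) n, g i
          = (∑ i ∈ Icc 1 n, g i) - ∑ i ∈ Icc 1 N, g i := by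
        rw [← Finset.Ico_add_one_right_eq_Icc, ← Finset.Ico_add_one_right_eq_Icc, ← Finset.Ico_add_one_right_eq_Icc,
          ← Finset.sum_Ico_consecutive g (by omega : 1 ≤ N + 1) (by omega : N + 1 ≤ n + 1)]
        ring
      calc P n ≤ ∏ i ∈ Icc (N + 1) n, Real.exp (-(K - δ) * g i) := by
              refine Finset.prod_le_prod (fun i hi => ?_) (fun i hi => ?_) <;>
                simp only [Finset.mem_Icc] at hi
              · exact (hN i (by omega)).1
              · have h1 := (hN i (by omega)).2.1
                have h2 := Real.add_one_le_exp (-(K - δ) * g i)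
                linarith
        _ = Real.exp (∑ i ∈ Icc (N + 1) n, -(K - δ) * g i) := (Real.exp_sum _ _).symm
        _ = Real.exp (-(K - δ) * ((∑ i ∈ Icc 1 n, g i) - ∑ i ∈ Icc 1 N, g i)) := by
              rw [← Finset.mul_sum, hs]
    · have h1 : Tendsto (fun n => (∑ i ∈ Icc 1 n, g i) - ∑ i ∈ Icc 1 N, g i)
          atTop atTop := tendsto_atTop_add_const_right _ _ hsum
      have h2 : Tendsto (fun n => -(K - δ) * ((∑ i ∈ Icc 1 n, g i) - ∑ i ∈ Icc 1 N, g i))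
          atTop atBot := Tendsto.const_mul_atTop_of_neg (by linarith) h1
      exact Real.tendsto_exp_atBot.comp h2
  -- conclude
  have hup : 1 / (K - δ) ≤ 1 / K + ε / 2 := by
    have h : 1 / (K - δ) - 1 / K ≤ ε / 2 := by
      rw [div_sub_div _ _ (ne_of_gt hKδ) (ne_of_gt hK), div_le_iff₀ (by positivity)]
      nlinarith [mul_nonneg (mul_nonneg hε.le hK.le) (show (0:ℝ) ≤ K / 2 - δ by linarith)]
    linarith
  have hlow : 1 / K - ε / 2 ≤ 1 / (K + δ) := by
    have h : 1 / K - 1 / (K + δ) ≤ ε / 2 := by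
      rw [div_sub_div _ _ (ne_of_gt hK) (ne_of_gt hKδ'), div_le_iff₀ (by positivity)]
      nlinarith [mul_nonneg (mul_nonneg hε.le hK.le) hδ0.le]
    linarith
  have hPA : Tendsto (fun n => P n * A) atTop (nhds 0) := by
    simpa using hPlim.mul_const A
  have hPB : Tendsto (fun n => P n * B) atTop (nhds 0) := by
    simpa using hPlim.mul_const B
  have evA : ∀ᶠ n in atTop, P n * A < ε / 2 :=
    hPA.eventually (eventually_lt_nhds (by linarith))
  have evB : ∀ᶠ n in atTop, P n * B < ε / 2 :=
    hPB.eventually (eventually_lt_nhds (by linarith))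
  obtain ⟨M, hM⟩ := eventually_atTop.mp ((evA.and evB).and (eventually_ge_atTop N))
  refine ⟨M, fun n hn => ?_⟩
  obtain ⟨⟨hA2, hB2⟩, hnN⟩ := hM n hn
  obtain ⟨k1, k2⟩ := key n hnN
  rw [Real.dist_eq, abs_lt]
  constructor <;> linarith


/-- Mokkadem–Pelletier–Slaoui lemma, first part. -/
theorem mps_lemma_limit
    (v γ : ℕ → ℝ) (vstar ε₀ m : ℝ)
    (hv : IsGS v vstar) (hγ : IsGS γ (-1))
    (hγ1 : ∀ n, γ n < 1)
    (hγ0 : Tendsto γ atTop (nhds 0))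
    (hε₀ : Tendsto (fun n : ℕ => ((n : ℝ) * γ n)⁻¹) atTop (nhds ε₀))
    (hm : 0 < m) (hme : 0 < m - vstar * ε₀)
    (π : ℕ → ℝ) (hπ : ∀ n, π n = ∏ i ∈ Finset.Icc 1 n, (1 - γ i))
    (hπ0 : ∀ n, π n ≠ 0) :
    Tendsto (fun n : ℕ =>
        v n * (π n) ^ m * ∑ i ∈ Finset.Icc 1 n, (π i) ^ (-m) * (γ i / v i))
      atTop (nhds (1 / (m - vstar * ε₀))) := by
  obtain ⟨hγpos, -⟩ := hγ
  have hπpos : ∀ n, 0 < π n := by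
    intro n; rw [hπ n]; exact Finset.prod_pos fun i _ => by linarith [hγ1 i]
  -- the sum of γ diverges
  have hε₀nonneg : 0 ≤ ε₀ := by
    refine ge_of_tendsto hε₀ ?_
    filter_upwards [eventually_ge_atTop 1] with n hn
    have h1 : (0:ℝ) < n := by exact_mod_cast hn
    have h2 := hγpos n
    positivity
  have hbig : (fun n : ℕ => 1 / (n:ℝ)) =O[atTop] γ := by
    rw [Asymptotics.isBigO_iff]
    refine ⟨ε₀ + 1, ?_⟩
    have h1 : ∀ᶠ n : ℕ in atTop, ((n:ℝ) * γ n)⁻¹ < ε₀ + 1 :=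
      hε₀.eventually (eventually_lt_nhds (by linarith))
    filter_upwards [h1, eventually_ge_atTop 1] with n h1 hn
    have hn0 : (0:ℝ) < n := by exact_mod_cast hn
    have hγn := hγpos n
    have hpos : (0:ℝ) < (n:ℝ) * γ n := by positivity
    rw [Real.norm_eq_abs, Real.norm_eq_abs, abs_of_pos (by positivity), abs_of_pos hγn]
    rw [← one_div] at h1
    rw [div_lt_iff₀ hpos] at h1
    rw [div_le_iff₀ hn0]
    nlinarith
  have hnotsum : ¬ Summable γ := fun h =>
    Real.not_summable_one_div_natCast (summable_of_isBigO_nat h hbig)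
  have hrange := (not_summable_iff_tendsto_nat_atTop_of_nonneg
    (fun n => (hγpos n).le)).mp hnotsum
  have hsum : Tendsto (fun n => ∑ i ∈ Icc 1 n, γ i) atTop atTop := by
    have h2 : Tendsto (fun n => ∑ i ∈ range (n + 1), γ i) atTop atTop :=
      hrange.comp (tendsto_add_atTop_nat 1)
    have h3 : ∀ n, ∑ i ∈ Icc 1 n, γ i = (∑ i ∈ range (n + 1), γ i) - γ 0 := by
      intro n
      rw [Finset.range_eq_Ico, ← Finset.Ico_add_one_right_eq_Icc,
        ← Finset.sum_Ico_consecutive γ (by omega : 0 ≤ 1) (by omega : 1 ≤ n + 1)]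
      simp
    rw [show (fun n => ∑ i ∈ Icc 1 n, γ i)
        = fun n => (∑ i ∈ range (n + 1), γ i) - γ 0 from funext h3]
    exact tendsto_atTop_add_const_right _ _ h2
  -- recursion setup
  set T : ℕ → ℝ := fun n =>
    v n * (π n) ^ m * ∑ i ∈ Finset.Icc 1 n, (π i) ^ (-m) * (γ i / v i) with hT
  set c : ℕ → ℝ := fun n => v n * (π n) ^ m / (v (n - 1) * (π (n - 1)) ^ m) with hc
  have hrec : ∀ n, 1 ≤ n → T n = c n * T (n - 1) + γ n := by
    intro n hn
    obtain ⟨k, rfl⟩ : ∃ k, n = k + 1 := ⟨n - 1, by omega⟩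
    simp only [hT, hc, Nat.add_sub_cancel]
    rw [Finset.sum_Icc_succ_top (by omega : 1 ≤ k + 1)]
    have hπ1 : (0:ℝ) < (π (k + 1)) ^ m := Real.rpow_pos_of_pos (hπpos _) m
    have hπ2 : (0:ℝ) < (π k) ^ m := Real.rpow_pos_of_pos (hπpos _) m
    rw [Real.rpow_neg (hπpos (k + 1)).le]
    have hv1 := hv.1 (k + 1)
    have hv2 := hv.1 k
    field_simp
  have hπrec : ∀ k, π (k + 1) = π k * (1 - γ (k + 1)) := by
    intro k
    rw [hπ, hπ, Finset.prod_Icc_succ_top (by omega : 1 ≤ k + 1)]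
  have hcform : ∀ k, c (k + 1) = (v (k + 1) / v k) * (1 - γ (k + 1)) ^ m := by
    intro k
    have hg1 : (0:ℝ) < 1 - γ (k + 1) := by linarith [hγ1 (k + 1)]
    simp only [hc, Nat.add_sub_cancel]
    rw [hπrec k, Real.mul_rpow (hπpos k).le hg1.le]
    have hπ2 : (0:ℝ) < (π k) ^ m := Real.rpow_pos_of_pos (hπpos _) m
    have hv2 := hv.1 k
    field_simp
  have hident : ∀ k, (1 - c (k + 1)) / γ (k + 1) =
      (1 - (1 - γ (k + 1)) ^ m) / γ (k + 1) +
      (1 - γ (k + 1)) ^ m *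
        (-((v (k + 1) / v k) * (((k + 1 : ℕ) : ℝ) * (1 - v k / v (k + 1))) *
          ((((k + 1 : ℕ) : ℝ) * γ (k + 1))⁻¹))) := by
    intro k
    rw [hcform k]
    have hv1 := hv.1 (k + 1)
    have hv2 := hv.1 k
    have hg := hγpos (k + 1)
    have hn0 : (0:ℝ) < ((k + 1 : ℕ) : ℝ) := by positivity
    field_simp
    ring
  -- the limit of (1 - c n) / γ n
  have hr1 : Tendsto (fun n => (1 - (1 - γ n) ^ m) / γ n) atTop (nhds m) := by
    have hd : HasDerivAt (fun x : ℝ => (1 - x) ^ m) (-m) 0 := by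
      have h1 : HasDerivAt (fun x : ℝ => 1 - x) (-1) 0 := by
        simpa using (hasDerivAt_id (0:ℝ)).const_sub 1
      have h2 : HasDerivAt (fun y : ℝ => y ^ m) (m * (1:ℝ) ^ (m - 1)) (1 - 0 : ℝ) := by
        simpa using Real.hasDerivAt_rpow_const (p := m) (x := 1) (Or.inl one_ne_zero)
      have h3 := h2.comp 0 h1
      have he : m * (1:ℝ) ^ (m - 1) * (-1) = -m := by rw [Real.one_rpow]; ring
      rw [he] at h3
      exact h3
    have hslope := hasDerivAt_iff_tendsto_slope.mp hd
    have hcomp : Tendsto γ atTop (nhdsWithin 0 {(0:ℝ)}ᶜ) := by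
      rw [tendsto_nhdsWithin_iff]
      exact ⟨hγ0, Eventually.of_forall fun n => by simpa using (hγpos n).ne'⟩
    have h4 := (hslope.comp hcomp).neg
    rw [neg_neg] at h4
    refine h4.congr fun n => ?_
    simp only [Function.comp_apply, slope_def_field, sub_zero, Real.one_rpow]
    ring
  have hr2 : Tendsto (fun n => (1 - γ n) ^ m) atTop (nhds 1) := by
    have hcont : ContinuousAt (fun x : ℝ => x ^ m) 1 :=
      Real.continuousAt_rpow_const 1 m (Or.inl one_ne_zero)
    have h1 : Tendsto (fun n => 1 - γ n) atTop (nhds (1 - 0 : ℝ)) :=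
      tendsto_const_nhds.sub hγ0
    have h2 := hcont.tendsto.comp (by simpa using h1)
    simpa [Real.one_rpow, Function.comp_def] using h2
  have hr3 : Tendsto (fun n => v (n - 1) / v n) atTop (nhds 1) := by
    have h1 : Tendsto (fun n : ℕ => ((n : ℝ) * (1 - v (n - 1) / v n)) * (1 / n))
        atTop (nhds (vstar * 0)) := hv.2.mul tendsto_one_div_atTop_nhds_zero_nat
    rw [mul_zero] at h1
    have h2 : Tendsto (fun n : ℕ => 1 - v (n - 1) / v n) atTop (nhds 0) := by
      refine h1.congr' ?_
      filter_upwards [eventually_ge_atTop 1] with n hn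
      have hn0 : ((n:ℝ)) ≠ 0 := by positivity
      field_simp
    have h3 := (tendsto_const_nhds (x := (1:ℝ))).sub h2
    rw [sub_zero] at h3
    refine h3.congr fun n => by ring
  have hr4 : Tendsto (fun n => v n / v (n - 1)) atTop (nhds 1) := by
    have h1 := hr3.inv₀ one_ne_zero
    rw [inv_one] at h1
    refine h1.congr fun n => ?_
    rw [inv_div]
  have hF : Tendsto (fun n : ℕ =>
      (1 - (1 - γ n) ^ m) / γ n +
      (1 - γ n) ^ m *
        (-((v n / v (n - 1)) * ((n : ℝ) * (1 - v (n - 1) / v n)) *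
          (((n : ℝ) * γ n)⁻¹)))) atTop (nhds (m - vstar * ε₀)) := by
    have h1 := hr1.add (hr2.mul (((hr4.mul hv.2).mul hε₀).neg))
    rw [show m + 1 * (-(1 * vstar * ε₀)) = m - vstar * ε₀ by ring] at h1
    exact h1
  have hclim : Tendsto (fun n => (1 - c n) / γ n) atTop (nhds (m - vstar * ε₀)) := by
    refine hF.congr' ?_
    filter_upwards [eventually_ge_atTop 1] with n hn
    obtain ⟨k, rfl⟩ : ∃ k, n = k + 1 := ⟨n - 1, by omega⟩
    simp only [Nat.add_sub_cancel]
    exact (hident k).symm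
  exact mps_aux T c γ (m - vstar * ε₀) hme hγpos hγ0 hrec hclim hsum
end

section
/- Let (v_n) ∈ GS(v*), (γ_n) ∈ GS(-1) with ε₀ = lim_{n→∞}(n γ_n)^{-1}, m > 0 with m - v* ε₀ > 0, and π_n = ∏_{i=1}^n (1 - γ_i) nonzero. Then for every positive sequence (α_n) with α_n → 0 and every a ∈ ℝ, lim_{n→∞} v_n π_n^m (∑_{i=1}^n π_i^{-m} (γ_i/v_i) α_i + a) = 0. -/
open Filter Finset
open Topology

private lemma mps_inv_step {x y t : ℝ} (hx : 0 < x) (hy : 0 < y) (h : y * t ≤ x) :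
    x⁻¹ * t ≤ y⁻¹ := by
  have h2 : t / x ≤ 1 / y := by
    rw [div_le_div_iff₀ hx hy]; nlinarith
  calc x⁻¹ * t = t / x := by ring
    _ ≤ 1 / y := h2
    _ = y⁻¹ := one_div y

private lemma mps_harm : Tendsto (fun n : ℕ => ∑ i ∈ Finset.Ioc 0 n, ((i : ℝ))⁻¹)
    atTop atTop := by
  have heq : ∀ n : ℕ, ∑ i ∈ Finset.Ioc 0 n, ((i : ℝ))⁻¹
      = ∑ i ∈ Finset.range n, ((i : ℝ) + 1)⁻¹ := by
    intro n
    induction n with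
    | zero => simp
    | succ k ih =>
      rw [Finset.sum_Ioc_succ_top (Nat.zero_le k), Finset.sum_range_succ, ih]
      push_cast; ring
  simp only [heq]
  simpa [one_div] using Real.tendsto_sum_range_one_div_nat_succ_atTop

set_option maxHeartbeats 1000000 in
/-- Mokkadem–Pelletier–Slaoui lemma, second part: negligible remainder terms. -/
theorem mps_lemma_remainder
    (v γ : ℕ → ℝ) (vstar ε₀ m : ℝ)
    (hv : IsGS v vstar) (hγ : IsGS γ (-1))
    (hγ1 : ∀ n, γ n < 1)
    (hγ0 : Tendsto γ atTop (nhds 0))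
    (hε₀ : Tendsto (fun n : ℕ => ((n : ℝ) * γ n)⁻¹) atTop (nhds ε₀))
    (hm : 0 < m) (hme : 0 < m - vstar * ε₀)
    (π : ℕ → ℝ) (hπ : ∀ n, π n = ∏ i ∈ Finset.Icc 1 n, (1 - γ i))
    (hπ0 : ∀ n, π n ≠ 0)
    (α : ℕ → ℝ) (hα : ∀ n, 0 < α n) (hα0 : Tendsto α atTop (nhds 0)) (a : ℝ) :
    Tendsto (fun n : ℕ =>
        v n * (π n) ^ m *
          ((∑ i ∈ Finset.Icc 1 n, (π i) ^ (-m) * (γ i / v i) * α i) + a))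
      atTop (nhds 0) := by
  obtain ⟨hvpos, hvlim⟩ := hv
  obtain ⟨hγpos, hγlim⟩ := hγ
  have hγsub : ∀ n, (0:ℝ) < 1 - γ n := fun n => by linarith [hγ1 n]
  have hπpos : ∀ n, 0 < π n := fun n => by
    rw [hπ]; exact Finset.prod_pos fun i _ => hγsub i
  set w : ℕ → ℝ := fun n => v n * π n ^ m with hwdef
  have hwpos : ∀ n, 0 < w n := fun n =>
    mul_pos (hvpos n) (Real.rpow_pos_of_pos (hπpos n) m)
  set u : ℕ → ℝ := fun n => (w n)⁻¹ with hudef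
  have hupos : ∀ n, 0 < u n := fun n => inv_pos.mpr (hwpos n)
  have hwu : ∀ n, w n * u n = 1 := fun n => mul_inv_cancel₀ (hwpos n).ne'
  -- ratio formula
  have hrw : ∀ n : ℕ, 1 ≤ n →
      w (n - 1) / w n = (v (n - 1) / v n) * (1 - γ n) ^ (-m) := by
    intro n hn
    obtain ⟨k, rfl⟩ : ∃ k, n = k + 1 := ⟨n - 1, by omega⟩
    have hπk : π (k + 1) = π k * (1 - γ (k + 1)) := by
      rw [hπ, hπ, Finset.prod_Icc_succ_top (by omega : 1 ≤ k + 1)]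
    have h1 : (0:ℝ) < 1 - γ (k + 1) := hγsub (k + 1)
    simp only [hwdef, Nat.add_sub_cancel]
    rw [hπk, Real.mul_rpow (hπpos k).le h1.le, Real.rpow_neg h1.le]
    have e1 : π k ^ m ≠ 0 := (Real.rpow_pos_of_pos (hπpos k) m).ne'
    have e2 : (1 - γ (k + 1)) ^ m ≠ 0 := (Real.rpow_pos_of_pos h1 m).ne'
    field_simp
  -- limit of (v(n-1)/v n)
  have hrv1 : Tendsto (fun n : ℕ => v (n - 1) / v n) atTop (𝓝 1) := by
    have h2 : Tendsto (fun n : ℕ =>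
        1 - ((n : ℝ) * (1 - v (n - 1) / v n)) * ((n : ℝ))⁻¹) atTop (𝓝 (1 - vstar * 0)) :=
      tendsto_const_nhds.sub (hvlim.mul tendsto_inv_atTop_nhds_zero_nat)
    rw [show (1 : ℝ) = 1 - vstar * 0 by ring]
    apply h2.congr'
    filter_upwards [eventually_ge_atTop 1] with n hn
    have hn0 : (n : ℝ) ≠ 0 := Nat.cast_ne_zero.mpr (by omega)
    field_simp
    ring
  -- limit of (v(n-1)/v n - 1)/γ n
  have hrv2 : Tendsto (fun n : ℕ => (v (n - 1) / v n - 1) / γ n) atTop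
      (𝓝 (-(vstar * ε₀))) := by
    have h2 : Tendsto (fun n : ℕ =>
        -(((n : ℝ) * (1 - v (n - 1) / v n)) * ((n : ℝ) * γ n)⁻¹)) atTop
        (𝓝 (-(vstar * ε₀))) := (hvlim.mul hε₀).neg
    apply h2.congr'
    filter_upwards [eventually_ge_atTop 1] with n hn
    have hn0 : (n : ℝ) ≠ 0 := Nat.cast_ne_zero.mpr (by omega)
    have hγn : γ n ≠ 0 := (hγpos n).ne'
    have hv0 : v n ≠ 0 := (hvpos n).ne'
    field_simp
    ring
  -- limit of ((1-γ n)^(-m) - 1)/γ n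
  have hA : Tendsto (fun n : ℕ => ((1 - γ n) ^ (-m) - 1) / γ n) atTop (𝓝 m) := by
    have hderiv : HasDerivAt (fun x : ℝ => (1 - x) ^ (-m)) m 0 := by
      have h1 : HasDerivAt (fun x : ℝ => 1 - x) (-1) 0 := (hasDerivAt_id 0).const_sub 1
      have h2 := h1.rpow_const (p := -m) (Or.inl (by norm_num))
      have : (-1 : ℝ) * (-m) * (1 - 0) ^ (-m - 1) = m := by
        rw [show (1:ℝ) - 0 = 1 by ring, Real.one_rpow]; ring
      rwa [this] at h2
    have hslope := hasDerivAt_iff_tendsto_slope.mp hderiv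
    have hγ0' : Tendsto γ atTop (𝓝[≠] (0:ℝ)) := by
      apply tendsto_nhdsWithin_of_tendsto_nhds_of_eventually_within _ hγ0
      exact Eventually.of_forall fun n => (hγpos n).ne'
    have h3 := hslope.comp hγ0'
    apply h3.congr
    intro n
    simp [Function.comp, slope_def_field, Real.one_rpow]
  -- limit of D
  have hD : Tendsto (fun n : ℕ => (w (n - 1) / w n - 1) / γ n) atTop
      (𝓝 (m - vstar * ε₀)) := by
    have h := (hrv1.mul hA).add hrv2
    rw [show m - vstar * ε₀ = 1 * m + -(vstar * ε₀) by ring]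
    apply h.congr'
    filter_upwards [eventually_ge_atTop 1] with n hn
    rw [hrw n hn]
    have key : v (n - 1) / v n * ((1 - γ n) ^ (-m)) - 1
        = v (n - 1) / v n * ((1 - γ n) ^ (-m) - 1) + (v (n - 1) / v n - 1) := by ring
    rw [key, add_div, mul_div_assoc]
  set c' : ℝ := (m - vstar * ε₀) / 2 with hc'def
  have hc' : 0 < c' := by positivity
  -- ratio to 1
  have hr1 : Tendsto (fun n : ℕ => w (n - 1) / w n) atTop (𝓝 1) := by
    have h := (hD.mul hγ0).add (tendsto_const_nhds (x := (1:ℝ)))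
    rw [show (1:ℝ) = (m - vstar * ε₀) * 0 + 1 by ring]
    apply h.congr
    intro n
    rw [div_mul_cancel₀ _ (hγpos n).ne']
    ring
  -- eventual lower bound on γ
  have hε₀nonneg : 0 ≤ ε₀ := by
    apply ge_of_tendsto hε₀
    filter_upwards [eventually_ge_atTop 1] with n hn
    have : (0:ℝ) < (n : ℝ) * γ n :=
      mul_pos (by exact_mod_cast Nat.pos_of_ne_zero (by omega)) (hγpos n)
    positivity
  have hγlow : ∀ᶠ n : ℕ in atTop, (ε₀ + 1)⁻¹ * ((n : ℝ))⁻¹ ≤ γ n := by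
    have h1 : ∀ᶠ n : ℕ in atTop, ((n : ℝ) * γ n)⁻¹ < ε₀ + 1 :=
      hε₀.eventually (eventually_lt_nhds (by linarith))
    filter_upwards [h1, eventually_ge_atTop 1] with n hn hn1
    have hnpos : (0:ℝ) < (n : ℝ) := by exact_mod_cast Nat.pos_of_ne_zero (by omega)
    have hng : (0:ℝ) < (n : ℝ) * γ n := mul_pos hnpos (hγpos n)
    have he1 : (0:ℝ) < ε₀ + 1 := by linarith
    have h2 : 1 < (ε₀ + 1) * ((n : ℝ) * γ n) := by
      have := mul_lt_mul_of_pos_right hn hng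
      rwa [inv_mul_cancel₀ hng.ne'] at this
    have h4 : (ε₀ + 1)⁻¹ < (n : ℝ) * γ n := by
      have h5 := mul_lt_mul_of_pos_left h2 (inv_pos.mpr he1)
      rwa [mul_one, inv_mul_cancel_left₀ he1.ne'] at h5
    have h6 := mul_lt_mul_of_pos_left h4 (inv_pos.mpr hnpos)
    rw [inv_mul_cancel_left₀ hnpos.ne'] at h6
    linarith [h6]
  -- eventual ratio bounds
  have hP : ∀ᶠ n : ℕ in atTop, 1 ≤ n ∧ w n * (1 + c' * γ n) ≤ w (n - 1) ∧
      w (n - 1) ≤ 2 * w n ∧ (ε₀ + 1)⁻¹ * ((n : ℝ))⁻¹ ≤ γ n := by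
    have hDe : ∀ᶠ n : ℕ in atTop, c' ≤ (w (n - 1) / w n - 1) / γ n :=
      hD.eventually (eventually_ge_nhds (by rw [hc'def]; linarith))
    have hre : ∀ᶠ n : ℕ in atTop, w (n - 1) / w n ≤ 2 :=
      hr1.eventually (eventually_le_nhds (by norm_num))
    filter_upwards [eventually_ge_atTop 1, hDe, hre, hγlow] with n h1 h2 h3 h4
    refine ⟨h1, ?_, (div_le_iff₀ (hwpos n)).mp h3, h4⟩
    have h5 := mul_le_mul_of_nonneg_right h2 (hγpos n).le
    rw [div_mul_cancel₀ _ (hγpos n).ne'] at h5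
    have h6 : 1 + c' * γ n ≤ w (n - 1) / w n := by linarith
    have h7 := (le_div_iff₀ (hwpos n)).mp h6
    linarith [h7]
  -- derived u-facts
  have hQ : ∀ᶠ n : ℕ in atTop, 1 ≤ n ∧ u (n - 1) * (1 + c' * γ n) ≤ u n ∧
      c' * (γ n * u n) ≤ 2 * (u n - u (n - 1)) ∧ (ε₀ + 1)⁻¹ * ((n : ℝ))⁻¹ ≤ γ n := by
    filter_upwards [hP] with n ⟨h1, h2, h3, h4⟩
    have hu1 : u (n - 1) * (1 + c' * γ n) ≤ u n := by
      simp only [hudef]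
      exact mps_inv_step (hwpos (n - 1)) (hwpos n) h2
    refine ⟨h1, hu1, ?_, h4⟩
    have hu2 : (2 * w n)⁻¹ ≤ u (n - 1) := by
      simp only [hudef]
      exact inv_anti₀ (hwpos (n - 1)) h3
    have hu2' : u n / 2 ≤ u (n - 1) := by
      have : (2 * w n)⁻¹ = u n / 2 := by
        simp only [hudef]; rw [mul_inv]; ring
      linarith [hu2, this.symm.le, this.le]
    nlinarith [hu1, hu2', mul_le_mul_of_nonneg_right hu2' (mul_pos hc' (hγpos n)).le,
      hupos n, hupos (n - 1), hγpos n, hc']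
  -- u tends to atTop, w tends to 0
  have hw0 : Tendsto w atTop (𝓝 0) := by
    obtain ⟨N₁, hN₁⟩ := eventually_atTop.mp hQ
    have hN₁1 : 1 ≤ N₁ := by
      by_contra h
      have h0 := (hN₁ 0 (by omega)).1
      omega
    have he1 : (0:ℝ) < ε₀ + 1 := by linarith
    have key : ∀ n, N₁ - 1 ≤ n → u (N₁ - 1) +
        c' * u (N₁ - 1) * (ε₀ + 1)⁻¹ * ∑ i ∈ Finset.Ioc (N₁ - 1) n, ((i : ℝ))⁻¹ ≤ u n := by
      intro n hn
      induction n, hn using Nat.le_induction with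
      | base => simp
      | succ n hn ih =>
        obtain ⟨q1, q2, q3, q4⟩ := hN₁ (n + 1) (by omega)
        simp only [Nat.add_sub_cancel] at q2
        rw [Finset.sum_Ioc_succ_top (by omega : N₁ - 1 ≤ n)]
        have hsum0 : 0 ≤ ∑ i ∈ Finset.Ioc (N₁ - 1) n, ((i : ℝ))⁻¹ :=
          Finset.sum_nonneg fun i _ => by positivity
        have hb0 : 0 ≤ c' * u (N₁ - 1) * (ε₀ + 1)⁻¹ := by
          have := hupos (N₁ - 1)
          have := inv_pos.mpr he1
          positivity
        have hun : u (N₁ - 1) ≤ u n := by nlinarith [ih, hsum0, hb0]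
        have hmul1 : (ε₀ + 1)⁻¹ * ((n + 1 : ℕ) : ℝ)⁻¹ * u (N₁ - 1) ≤ γ (n + 1) * u n :=
          mul_le_mul q4 hun (hupos _).le (hγpos _).le
        have hmul2 := mul_le_mul_of_nonneg_left hmul1 hc'.le
        have q2' : u n + c' * γ (n + 1) * u n ≤ u (n + 1) := by nlinarith [q2]
        nlinarith [ih, hmul2, q2']
    have hC : Tendsto (fun n : ℕ => (∑ i ∈ Finset.Ioc 0 n, ((i : ℝ))⁻¹) +
        -(∑ i ∈ Finset.Ioc 0 (N₁ - 1), ((i : ℝ))⁻¹)) atTop atTop :=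
      tendsto_atTop_add_const_right atTop _ mps_harm
    have hHsum : Tendsto (fun n : ℕ => ∑ i ∈ Finset.Ioc (N₁ - 1) n, ((i : ℝ))⁻¹)
        atTop atTop := by
      apply hC.congr'
      filter_upwards [eventually_ge_atTop (N₁ - 1)] with n hn
      rw [← Finset.sum_Ioc_consecutive (fun i : ℕ => ((i : ℝ))⁻¹) (Nat.zero_le (N₁ - 1)) hn]
      ring
    have hb : 0 < c' * u (N₁ - 1) * (ε₀ + 1)⁻¹ :=
      mul_pos (mul_pos hc' (hupos _)) (inv_pos.mpr he1)
    have hu_top : Tendsto u atTop atTop := by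
      apply tendsto_atTop_mono' atTop ?_ (tendsto_atTop_add_const_left atTop (u (N₁ - 1))
        (hHsum.const_mul_atTop hb))
      filter_upwards [eventually_ge_atTop (N₁ - 1)] with n hn
      exact key n hn
    have h := hu_top.inv_tendsto_atTop
    have huw : u⁻¹ = w := by
      funext n
      simp [hudef]
    rwa [huw] at h
  -- summand rewrite
  have hterm : ∀ i : ℕ, π i ^ (-m) * (γ i / v i) * α i = γ i * α i * u i := by
    intro i
    rw [Real.rpow_neg (hπpos i).le]
    simp only [hudef, hwdef]
    rw [div_eq_mul_inv, mul_inv]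
    ring
  rw [Metric.tendsto_atTop]
  intro ε hε
  have hε' : 0 < ε * c' / 8 := by positivity
  have hαe : ∀ᶠ n : ℕ in atTop, α n ≤ ε * c' / 8 := hα0.eventually (eventually_le_nhds hε')
  obtain ⟨N, hN⟩ := eventually_atTop.mp (hQ.and hαe)
  have hN1 : 1 ≤ N := by
    by_contra h
    have h0 := (hN 0 (by omega)).1.1
    omega
  have htail : ∀ n, N - 1 ≤ n →
      ∑ i ∈ Finset.Ioc (N - 1) n, γ i * α i * u i ≤ ε / 4 * u n := by
    intro n hn
    induction n, hn using Nat.le_induction with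
    | base =>
      simp only [Finset.Ioc_self, Finset.sum_empty]
      have := hupos (N - 1)
      positivity
    | succ n hn ih =>
      obtain ⟨⟨q1, q2, q3, q4⟩, q5⟩ := hN (n + 1) (by omega)
      simp only [Nat.add_sub_cancel] at q3
      rw [Finset.sum_Ioc_succ_top (by omega : N - 1 ≤ n)]
      have hγu : 0 < γ (n + 1) * u (n + 1) := mul_pos (hγpos _) (hupos _)
      have t1 : γ (n + 1) * α (n + 1) * u (n + 1) ≤
          ε * c' / 8 * (γ (n + 1) * u (n + 1)) := by
        linarith [mul_le_mul_of_nonneg_left q5 hγu.le]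
      have h8 := mul_le_mul_of_nonneg_left q3 (by positivity : (0:ℝ) ≤ ε / 8)
      linarith [ih, t1, h8]
  set C : ℝ := (∑ i ∈ Finset.Ioc 0 (N - 1), γ i * α i * u i) + a with hCdef
  have hhead : Tendsto (fun n : ℕ => w n * C) atTop (𝓝 0) := by
    simpa using hw0.mul_const C
  obtain ⟨N₂, hN₂⟩ := Metric.tendsto_atTop.mp hhead (ε / 2) (by linarith)
  refine ⟨max N N₂, fun n hn => ?_⟩
  have hnN : N ≤ n := le_trans (le_max_left _ _) hn
  have hnN₂ : N₂ ≤ n := le_trans (le_max_right _ _) hn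
  have hIcc : Finset.Icc 1 n = Finset.Ioc 0 n := by
    ext i; simp [Finset.mem_Icc, Finset.mem_Ioc]; omega
  have hsplit : ∑ i ∈ Finset.Icc 1 n, π i ^ (-m) * (γ i / v i) * α i
      = (∑ i ∈ Finset.Ioc 0 (N - 1), γ i * α i * u i) +
        ∑ i ∈ Finset.Ioc (N - 1) n, γ i * α i * u i := by
    calc ∑ i ∈ Finset.Icc 1 n, π i ^ (-m) * (γ i / v i) * α i
        = ∑ i ∈ Finset.Ioc 0 n, γ i * α i * u i := by
          rw [hIcc]; exact Finset.sum_congr rfl fun i _ => hterm i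
      _ = _ := (Finset.sum_Ioc_consecutive _ (Nat.zero_le (N - 1))
          (by omega : N - 1 ≤ n)).symm
  set T : ℝ := ∑ i ∈ Finset.Ioc (N - 1) n, γ i * α i * u i with hTdef
  have hT0 : 0 ≤ T := Finset.sum_nonneg fun i _ =>
    mul_nonneg (mul_nonneg (hγpos i).le (hα i).le) (hupos i).le
  have hT : T ≤ ε / 4 * u n := htail n (by omega)
  have hwT : w n * T ≤ ε / 4 := by
    have h9 := mul_le_mul_of_nonneg_left hT (hwpos n).le
    have h10 : w n * (ε / 4 * u n) = ε / 4 := by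
      rw [show w n * (ε / 4 * u n) = ε / 4 * (w n * u n) by ring, hwu n, mul_one]
    linarith
  have hwTpos : 0 ≤ w n * T := mul_nonneg (hwpos n).le hT0
  have hhd := hN₂ n hnN₂
  rw [Real.dist_eq, sub_zero] at hhd
  have hfn : v n * π n ^ m * ((∑ i ∈ Finset.Icc 1 n, π i ^ (-m) * (γ i / v i) * α i) + a)
      = w n * C + w n * T := by
    rw [hsplit, hCdef, hTdef]
    simp only [hwdef]
    ring
  simp only [Real.dist_eq, sub_zero]
  rw [hfn]
  calc |w n * C + w n * T| ≤ |w n * C| + |w n * T| := abs_add_le _ _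
    _ < ε / 2 + ε / 2 := by
        have habs : |w n * T| = w n * T := abs_of_nonneg hwTpos
        rw [habs]
        have : w n * T < ε / 2 := by linarith
        exact add_lt_add hhd this
    _ = ε := by ring
end

section
/- Under the SAVE coverage conditions E(X | P_E X) = P_E X and cov(X | P_E X) = I_d - P_E, where E = S_{Y|X} is the central dimension-reduction space and P_E orthogonal projection onto E, the SAVE matrix Λ = E[(I_d - cov(X|Y))²] satisfies: for any vector v orthogonal to E, Λ v = 0; equivalently, the column space of Λ is contained in E. -/
open MeasureTheory Matrix

lemma save_aux_mul_integrable {Ω : Type*} {mΩ' : MeasurableSpace Ω} {μ : Measure Ω}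
    {f g : Ω → ℝ} (hf : MemLp f 2 μ) (hg : MemLp g 2 μ) :
    Integrable (fun ω => f ω * g ω) μ := by
  have : ENNReal.HolderTriple 2 2 1 := ⟨by rw [inv_one]; exact ENNReal.inv_two_add_inv_two⟩
  have h := hg.smul (r := 1) hf
  exact memLp_one_iff_integrable.mp h

/-- Under the SAVE coverage conditions `E(X | P_E X) = P_E X` and
`cov(X | P_E X) = I - P_E` (with `P` the orthogonal projection onto the central
subspace `E = S_{Y|X}`, expressed through conditional independence of `Y` and `X`
given `P X`), the SAVE matrix `Λ = E[(I - cov(X|Y))²]` annihilates every vector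
orthogonal to `E`. -/
theorem save_range_in_central_subspace
    {Ω : Type*} [mΩ : MeasurableSpace Ω] (μ : Measure Ω) [IsProbabilityMeasure μ]
    (d : ℕ) (X : Ω → (Fin d → ℝ)) (Y : Ω → ℝ)
    (hX : Measurable X) (hY : Measurable Y)
    (hXL2 : ∀ k, MemLp (fun ω => X ω k) 2 μ)
    (hXmean : ∀ k, ∫ ω, X ω k ∂μ = 0)
    (P : Matrix (Fin d) (Fin d) ℝ) (hPsymm : P.IsSymm) (hPproj : P * P = P)
    -- σ-algebras generated by P_E X and by Y
    (m0 mY : MeasurableSpace Ω)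
    (hm0 : m0 = MeasurableSpace.comap (fun ω => P.mulVec (X ω)) inferInstance)
    (hmY : mY = MeasurableSpace.comap Y inferInstance)
    -- E(X | P_E X) = P_E X
    (hcond1 : ∀ k, (μ[fun ω => X ω k | m0]) =ᵐ[μ] fun ω => P.mulVec (X ω) k)
    -- cov(X | P_E X) = I - P_E
    (hcond2 : ∀ k ℓ,
      (fun ω => (μ[fun ω' => X ω' k * X ω' ℓ | m0]) ω
          - P.mulVec (X ω) k * P.mulVec (X ω) ℓ)
        =ᵐ[μ] fun _ => ((1 : Matrix (Fin d) (Fin d) ℝ) - P) k ℓ)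
    -- Y ⫫ X | P_E X, through the tower property E[g(X) | Y] = E[E[g(X) | P_E X] | Y]
    (hCI : ∀ g : (Fin d → ℝ) → ℝ, Measurable g → Integrable (fun ω => g (X ω)) μ →
      (μ[fun ω => g (X ω) | mY]) =ᵐ[μ] (μ[(μ[fun ω => g (X ω) | m0]) | mY]))
    -- conditional covariance matrix of X given Y
    (C : Ω → Matrix (Fin d) (Fin d) ℝ)
    (hC : ∀ k ℓ, (fun ω => C ω k ℓ) =ᵐ[μ] fun ω =>
      (μ[fun ω' => X ω' k * X ω' ℓ | mY]) ω
        - (μ[fun ω' => X ω' k | mY]) ω * (μ[fun ω' => X ω' ℓ | mY]) ω)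
    (hCint : ∀ k ℓ, Integrable (fun ω =>
      (((1 : Matrix (Fin d) (Fin d) ℝ) - C ω)
        * ((1 : Matrix (Fin d) (Fin d) ℝ) - C ω)) k ℓ) μ)
    -- the SAVE matrix
    (Λ : Matrix (Fin d) (Fin d) ℝ)
    (hΛ : ∀ k ℓ, Λ k ℓ = ∫ ω, (((1 : Matrix (Fin d) (Fin d) ℝ) - C ω)
        * ((1 : Matrix (Fin d) (Fin d) ℝ) - C ω)) k ℓ ∂μ) :
    ∀ v : Fin d → ℝ, P.mulVec v = 0 → Λ.mulVec v = 0 := by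
  intro v hv
  have hmYle : mY ≤ mΩ := by subst hmY; exact hY.comap_le
  -- orthogonality of v to the range of P
  have hPv : ∀ x : Fin d → ℝ, ∑ ℓ, v ℓ * P.mulVec x ℓ = 0 := by
    intro x
    have hz : ∀ j, ∑ ℓ, v ℓ * P ℓ j = 0 := by
      intro j
      have h := congrFun hv j
      simp only [Matrix.mulVec, dotProduct, Pi.zero_apply] at h
      calc ∑ ℓ, v ℓ * P ℓ j = ∑ ℓ, P j ℓ * v ℓ := by
            refine Finset.sum_congr rfl fun ℓ _ => ?_
            rw [hPsymm.apply j ℓ, mul_comm]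
        _ = 0 := h
    calc ∑ ℓ, v ℓ * P.mulVec x ℓ
        = ∑ ℓ, ∑ j, v ℓ * (P ℓ j * x j) := by
          simp [Matrix.mulVec, dotProduct, Finset.mul_sum]
      _ = ∑ j, (∑ ℓ, v ℓ * P ℓ j) * x j := by
          rw [Finset.sum_comm]
          refine Finset.sum_congr rfl fun j _ => ?_
          rw [Finset.sum_mul]
          exact Finset.sum_congr rfl fun ℓ _ => by ring
      _ = 0 := by simp [hz]
  have hPvk : ∀ k, ∑ ℓ, v ℓ * P k ℓ = 0 := by
    intro k
    have h := congrFun hv k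
    simp only [Matrix.mulVec, dotProduct, Pi.zero_apply] at h
    calc ∑ ℓ, v ℓ * P k ℓ = ∑ ℓ, P k ℓ * v ℓ := by
          exact Finset.sum_congr rfl fun ℓ _ => mul_comm _ _
      _ = 0 := h
  -- integrability
  have hXint : ∀ k, Integrable (fun ω => X ω k) μ := fun k => (hXL2 k).integrable one_le_two
  have hXX : ∀ k ℓ, Integrable (fun ω => X ω k * X ω ℓ) μ :=
    fun k ℓ => save_aux_mul_integrable (hXL2 k) (hXL2 ℓ)
  have hPX2 : ∀ k, MemLp (fun ω => P.mulVec (X ω) k) 2 μ := by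
    intro k
    have he : (fun ω => P.mulVec (X ω) k) = fun ω => ∑ j, P k j * X ω j := by
      funext ω; simp [Matrix.mulVec, dotProduct]
    have h := memLp_finset_sum' (μ := μ) Finset.univ
      (f := fun j => fun ω => P k j * X ω j) (fun j _ => ((hXL2 j).const_mul (P k j)))
    have he2 : (∑ j : Fin d, fun ω => P k j * X ω j) = fun ω => ∑ j, P k j * X ω j := by
      funext ω; simp
    rw [he2] at h; rw [he]; exact h
  have hPXint : ∀ k, Integrable (fun ω => P.mulVec (X ω) k) μ :=
    fun k => (hPX2 k).integrable one_le_two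
  have hPXPX : ∀ k ℓ, Integrable (fun ω => P.mulVec (X ω) k * P.mulVec (X ω) ℓ) μ :=
    fun k ℓ => save_aux_mul_integrable (hPX2 k) (hPX2 ℓ)
  -- tower property specializations
  have s1 : ∀ k, (μ[fun ω => X ω k | mY]) =ᵐ[μ] (μ[fun ω => P.mulVec (X ω) k | mY]) := by
    intro k
    exact (hCI (fun x => x k) (measurable_pi_apply k) (hXint k)).trans
      (condExp_congr_ae (hcond1 k))
  have s2 : ∀ k ℓ, (μ[fun ω => X ω k * X ω ℓ | mY]) =ᵐ[μ]
      (μ[fun ω => P.mulVec (X ω) k * P.mulVec (X ω) ℓ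
          + ((1 : Matrix (Fin d) (Fin d) ℝ) - P) k ℓ | mY]) := by
    intro k ℓ
    refine (hCI (fun x => x k * x ℓ)
        ((measurable_pi_apply k).mul (measurable_pi_apply ℓ)) (hXX k ℓ)).trans
      (condExp_congr_ae ?_)
    filter_upwards [hcond2 k ℓ] with ω h
    linarith
  -- generic fact: a.e., ∑ ℓ, v ℓ * μ[f ℓ|mY] ω = μ[fun ω => ∑ ℓ, v ℓ * f ℓ ω|mY] ω
  have hsumCE : ∀ f : Fin d → Ω → ℝ, (∀ ℓ, Integrable (f ℓ) μ) →
      (fun ω => ∑ ℓ, v ℓ * (μ[f ℓ | mY]) ω)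
        =ᵐ[μ] (μ[fun ω => ∑ ℓ, v ℓ * f ℓ ω | mY]) := by
    intro f hf
    have hs := condExp_finset_sum (μ := μ) (m := mY)
      (f := fun ℓ => fun ω => v ℓ * f ℓ ω) (s := Finset.univ)
      (fun ℓ _ => (hf ℓ).const_mul (v ℓ))
    have hsm : ∀ ℓ, (μ[fun ω => v ℓ * f ℓ ω | mY]) =ᵐ[μ]
        fun ω => v ℓ * (μ[f ℓ | mY]) ω := by
      intro ℓ
      have h := condExp_smul (μ := μ) (m := mY) (v ℓ) (f ℓ)
      filter_upwards [h] with ω hω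
      exact hω
    have hall : ∀ᵐ ω ∂μ, ∀ ℓ, (μ[fun ω => v ℓ * f ℓ ω | mY]) ω
        = v ℓ * (μ[f ℓ | mY]) ω := ae_all_iff.2 hsm
    have heq : (fun ω => ∑ ℓ, v ℓ * f ℓ ω)
        = (∑ ℓ : Fin d, fun ω => v ℓ * f ℓ ω) := by
      funext ω; simp [Finset.sum_apply]
    rw [heq]
    filter_upwards [hs, hall] with ω h1 h2
    simp only [Finset.sum_apply] at h1 ⊢
    rw [h1]
    exact (Finset.sum_congr rfl fun ℓ _ => h2 ℓ).symm
  -- a.e., ∑ ℓ, v ℓ * E[X ℓ | Y] = 0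
  have hBsum : (fun ω => ∑ ℓ, v ℓ * (μ[fun ω' => X ω' ℓ | mY]) ω)
      =ᵐ[μ] (fun _ => (0 : ℝ)) := by
    have hall : ∀ᵐ ω ∂μ, ∀ ℓ, (μ[fun ω' => X ω' ℓ | mY]) ω
        = (μ[fun ω' => P.mulVec (X ω') ℓ | mY]) ω := ae_all_iff.2 s1
    have e1 : (fun ω => ∑ ℓ, v ℓ * (μ[fun ω' => X ω' ℓ | mY]) ω)
        =ᵐ[μ] (fun ω => ∑ ℓ, v ℓ * (μ[fun ω' => P.mulVec (X ω') ℓ | mY]) ω) := by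
      filter_upwards [hall] with ω h
      exact Finset.sum_congr rfl fun ℓ _ => by rw [h ℓ]
    have e2 := hsumCE (fun ℓ ω => P.mulVec (X ω) ℓ) hPXint
    have e3 : (fun ω => ∑ ℓ, v ℓ * P.mulVec (X ω) ℓ) = fun _ => (0 : ℝ) := by
      funext ω; exact hPv (X ω)
    have e4 : (μ[fun ω => ∑ ℓ, v ℓ * P.mulVec (X ω) ℓ | mY]) =ᵐ[μ] (fun _ => (0 : ℝ)) := by
      rw [e3, condExp_const (μ := μ) hmYle (0 : ℝ)]
    exact e1.trans (e2.trans e4)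
  -- a.e., ∑ ℓ, v ℓ * E[X k * X ℓ | Y] = v k
  have hAsum : ∀ k, (fun ω => ∑ ℓ, v ℓ * (μ[fun ω' => X ω' k * X ω' ℓ | mY]) ω)
      =ᵐ[μ] (fun _ => v k) := by
    intro k
    have hall : ∀ᵐ ω ∂μ, ∀ ℓ, (μ[fun ω' => X ω' k * X ω' ℓ | mY]) ω
        = (μ[fun ω => P.mulVec (X ω) k * P.mulVec (X ω) ℓ
            + ((1 : Matrix (Fin d) (Fin d) ℝ) - P) k ℓ | mY]) ω := ae_all_iff.2 (s2 k)
    have e1 : (fun ω => ∑ ℓ, v ℓ * (μ[fun ω' => X ω' k * X ω' ℓ | mY]) ω)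
        =ᵐ[μ] (fun ω => ∑ ℓ, v ℓ * (μ[fun ω => P.mulVec (X ω) k * P.mulVec (X ω) ℓ
            + ((1 : Matrix (Fin d) (Fin d) ℝ) - P) k ℓ | mY]) ω) := by
      filter_upwards [hall] with ω h
      exact Finset.sum_congr rfl fun ℓ _ => by rw [h ℓ]
    have e2 := hsumCE
      (fun ℓ ω => P.mulVec (X ω) k * P.mulVec (X ω) ℓ
        + ((1 : Matrix (Fin d) (Fin d) ℝ) - P) k ℓ)
      (fun ℓ => (hPXPX k ℓ).add (integrable_const _))
    have e3 : (fun ω => ∑ ℓ, v ℓ * (P.mulVec (X ω) k * P.mulVec (X ω) ℓ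
        + ((1 : Matrix (Fin d) (Fin d) ℝ) - P) k ℓ)) = fun _ => v k := by
      funext ω
      have h1 : ∑ ℓ, v ℓ * (P.mulVec (X ω) k * P.mulVec (X ω) ℓ)
          = P.mulVec (X ω) k * ∑ ℓ, v ℓ * P.mulVec (X ω) ℓ := by
        rw [Finset.mul_sum]
        exact Finset.sum_congr rfl fun ℓ _ => by ring
      have h2 : ∑ ℓ, v ℓ * ((1 : Matrix (Fin d) (Fin d) ℝ) - P) k ℓ = v k := by
        simp only [Matrix.sub_apply, Matrix.one_apply, mul_sub, Finset.sum_sub_distrib]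
        rw [hPvk k]
        simp [mul_ite, Finset.sum_ite_eq]
      calc ∑ ℓ, v ℓ * (P.mulVec (X ω) k * P.mulVec (X ω) ℓ
              + ((1 : Matrix (Fin d) (Fin d) ℝ) - P) k ℓ)
          = ∑ ℓ, (v ℓ * (P.mulVec (X ω) k * P.mulVec (X ω) ℓ)
              + v ℓ * ((1 : Matrix (Fin d) (Fin d) ℝ) - P) k ℓ) := by
            exact Finset.sum_congr rfl fun ℓ _ => by ring
        _ = (∑ ℓ, v ℓ * (P.mulVec (X ω) k * P.mulVec (X ω) ℓ))
              + ∑ ℓ, v ℓ * ((1 : Matrix (Fin d) (Fin d) ℝ) - P) k ℓ := by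
            rw [Finset.sum_add_distrib]
        _ = v k := by rw [h1, hPv (X ω), mul_zero, zero_add, h2]
    have e4 : (μ[fun ω => ∑ ℓ, v ℓ * (P.mulVec (X ω) k * P.mulVec (X ω) ℓ
        + ((1 : Matrix (Fin d) (Fin d) ℝ) - P) k ℓ) | mY]) =ᵐ[μ] (fun _ => v k) := by
      rw [e3, condExp_const (μ := μ) hmYle (v k)]
    exact e1.trans (e2.trans e4)
  -- a.e., C ω annihilates... rather C ω v = v
  have hCv : ∀ᵐ ω ∂μ, (C ω).mulVec v = v := by
    have hCall : ∀ᵐ ω ∂μ, ∀ k ℓ, C ω k ℓ =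
        (μ[fun ω' => X ω' k * X ω' ℓ | mY]) ω
          - (μ[fun ω' => X ω' k | mY]) ω * (μ[fun ω' => X ω' ℓ | mY]) ω :=
      ae_all_iff.2 fun k => ae_all_iff.2 fun ℓ => hC k ℓ
    have hAall : ∀ᵐ ω ∂μ, ∀ k,
        ∑ ℓ, v ℓ * (μ[fun ω' => X ω' k * X ω' ℓ | mY]) ω = v k := ae_all_iff.2 hAsum
    filter_upwards [hCall, hAall, hBsum] with ω h1 h2 h3
    funext k
    have : (C ω).mulVec v k = ∑ ℓ, C ω k ℓ * v ℓ := by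
      simp [Matrix.mulVec, dotProduct]
    rw [this]
    calc ∑ ℓ, C ω k ℓ * v ℓ
        = ∑ ℓ, (v ℓ * (μ[fun ω' => X ω' k * X ω' ℓ | mY]) ω
            - (μ[fun ω' => X ω' k | mY]) ω * (v ℓ * (μ[fun ω' => X ω' ℓ | mY]) ω)) := by
          refine Finset.sum_congr rfl fun ℓ _ => ?_
          rw [h1 k ℓ]; ring
      _ = (∑ ℓ, v ℓ * (μ[fun ω' => X ω' k * X ω' ℓ | mY]) ω)
            - (μ[fun ω' => X ω' k | mY]) ω
              * ∑ ℓ, v ℓ * (μ[fun ω' => X ω' ℓ | mY]) ω := by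
          rw [Finset.sum_sub_distrib, Finset.mul_sum]
      _ = v k := by rw [h2 k, h3, mul_zero, sub_zero]
  -- conclude
  funext k
  have hmv : Λ.mulVec v k = ∑ ℓ, Λ k ℓ * v ℓ := by
    simp [Matrix.mulVec, dotProduct]
  have hterm : ∀ ℓ, Λ k ℓ * v ℓ = ∫ ω, (((1 : Matrix (Fin d) (Fin d) ℝ) - C ω)
      * ((1 : Matrix (Fin d) (Fin d) ℝ) - C ω)) k ℓ * v ℓ ∂μ := by
    intro ℓ
    rw [hΛ k ℓ, ← integral_mul_const]
  have hswap : ∑ ℓ, Λ k ℓ * v ℓ = ∫ ω, ∑ ℓ, (((1 : Matrix (Fin d) (Fin d) ℝ) - C ω)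
      * ((1 : Matrix (Fin d) (Fin d) ℝ) - C ω)) k ℓ * v ℓ ∂μ := by
    calc ∑ ℓ, Λ k ℓ * v ℓ
        = ∑ ℓ, ∫ ω, (((1 : Matrix (Fin d) (Fin d) ℝ) - C ω)
            * ((1 : Matrix (Fin d) (Fin d) ℝ) - C ω)) k ℓ * v ℓ ∂μ :=
          Finset.sum_congr rfl fun ℓ _ => hterm ℓ
      _ = ∫ ω, ∑ ℓ, (((1 : Matrix (Fin d) (Fin d) ℝ) - C ω)
            * ((1 : Matrix (Fin d) (Fin d) ℝ) - C ω)) k ℓ * v ℓ ∂μ :=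
          (integral_finset_sum _ (fun ℓ _ => (hCint k ℓ).mul_const (v ℓ))).symm
  have hzero : ∫ ω, ∑ ℓ, (((1 : Matrix (Fin d) (Fin d) ℝ) - C ω)
      * ((1 : Matrix (Fin d) (Fin d) ℝ) - C ω)) k ℓ * v ℓ ∂μ = 0 := by
    apply integral_eq_zero_of_ae
    filter_upwards [hCv] with ω h
    have h0 : ((1 : Matrix (Fin d) (Fin d) ℝ) - C ω).mulVec v = 0 := by
      rw [Matrix.sub_mulVec, Matrix.one_mulVec, h, sub_self]
    have h1 : (((1 : Matrix (Fin d) (Fin d) ℝ) - C ω)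
        * ((1 : Matrix (Fin d) (Fin d) ℝ) - C ω)).mulVec v = 0 := by
      rw [← Matrix.mulVec_mulVec, h0, Matrix.mulVec_zero]
    have h2 : (((1 : Matrix (Fin d) (Fin d) ℝ) - C ω)
        * ((1 : Matrix (Fin d) (Fin d) ℝ) - C ω)).mulVec v k = 0 := by rw [h1]; rfl
    simpa [Matrix.mulVec, dotProduct] using h2
  simp only [Pi.zero_apply]
  rw [hmv, hswap, hzero]
end
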